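/- arXiv:2303.05311 — 3 statements merged into one kernel-verified Lean document; each statement's English description precedes it below -/
import Mathlib

section
/- If g ∈ D^1_1 then g(x) ≤ C x^{−γ} for all x ∈ (0,1], where C depends only on a₁, A, χ* and γ. -/
open Set Filter MeasureTheory Topology

noncomputable section

/-- `χ_ℓ(x) = min { x^ℓ, χ* }`. -/
def chi (χ : ℝ) (ℓ : ℕ) (x : ℝ) : ℝ := min (x ^ ℓ) χ

/-- `Lip_g(x) = limsup_{y → x, y ∈ s} |g x - g y| / |x - y|` (valued in `ℝ≥0∞`). -/
def lipWithin (g : ℝ → ℝ) (s : Set ℝ) (x : ℝ) : ENNReal :=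
  Filter.limsup (fun y => ENNReal.ofReal (|g x - g y| / |x - y|)) (nhdsWithin x (s \ {x}))

/-- The cone `D^k` of positive `(k-1)`-times continuously differentiable functions on `(0,1]`
with `|g^{(ℓ)}|/g ≤ a_ℓ/χ_ℓ` for `1 ≤ ℓ < k` and `Lip_{g^{(k-1)}}/g ≤ a_k/χ_k`.
For `k = 1` this is the set of positive Lipschitz functions with `Lip_g/g ≤ a₁/χ₁`. -/
def memD (χ : ℝ) (a : ℕ → ℝ) (k : ℕ) (g : ℝ → ℝ) : Prop :=
  (∀ x ∈ Set.Ioc (0:ℝ) 1, 0 < g x) ∧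
  ContDiffOn ℝ (k - 1 : ℕ) g (Set.Ioc (0:ℝ) 1) ∧
  (∀ ℓ : ℕ, 1 ≤ ℓ → ℓ < k → ∀ x ∈ Set.Ioc (0:ℝ) 1,
      |iteratedDerivWithin ℓ g (Set.Ioc (0:ℝ) 1) x| / g x ≤ a ℓ / chi χ ℓ x) ∧
  (∀ x ∈ Set.Ioc (0:ℝ) 1,
      lipWithin (iteratedDerivWithin (k - 1) g (Set.Ioc (0:ℝ) 1)) (Set.Ioc (0:ℝ) 1) x
        ≤ ENNReal.ofReal (a k * g x / chi χ k x))

/-- The cone `D^k_1` : members of `D^k` which are probability densities with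
`∫₀ˣ g ≤ A x^{1-γ}`. -/
def memD1 (χ γ A : ℝ) (a : ℕ → ℝ) (k : ℕ) (g : ℝ → ℝ) : Prop :=
  memD χ a k g ∧ (∫ s in (0:ℝ)..1, g s) = 1 ∧
  ∀ x ∈ Set.Ioc (0:ℝ) 1, (∫ s in (0:ℝ)..x, g s) ≤ A * x ^ (1 - γ)

end

/-! On a dyadic interval `[x/2, x] ⊆ (0,1]` one has `χ₁ ≥ x χ*/2`, so the bound
`Lip_g ≤ a₁ g / χ₁` and Grönwall's inequality give `g(x) ≤ e^{a₁/χ*} g(y)` for all `y` in it.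
Integrating over `[x/2, x]`, `(x/2) e^{-a₁/χ*} g(x) ≤ ∫₀ˣ g ≤ A x^{1-γ}`, that is
`g(x) ≤ 2 A e^{a₁/χ*} x^{-γ}`. -/

lemma slope_le_abs_div (g : ℝ → ℝ) (t z : ℝ) : slope g t z ≤ |g t - g z| / |t - z| := by
  rw [slope_def_field, abs_sub_comm (g t), abs_sub_comm t, ← abs_div]
  exact le_abs_self _

lemma eventually_slope_lt_of_lipWithin_le {g : ℝ → ℝ} {s : Set ℝ} {t c r : ℝ}
    (hs : s ∈ 𝓝[>] t) (h : lipWithin g s t ≤ ENNReal.ofReal c) (hc : 0 ≤ c) (hr : c < r) :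
    ∀ᶠ z in 𝓝[>] t, slope g t z < r := by
  have hle : 𝓝[>] t ≤ 𝓝[s \ {t}] t :=
    nhdsWithin_le_of_mem (sdiff_mem hs (mem_of_superset self_mem_nhdsWithin fun _ hz ↦ hz.ne'))
  have hlt : lipWithin g s t < ENNReal.ofReal r :=
    h.trans_lt (ENNReal.ofReal_lt_ofReal_iff'.mpr ⟨hr, hc.trans_lt hr⟩)
  filter_upwards [hle (eventually_lt_of_limsup_lt hlt)] with z hz
  exact (slope_le_abs_div g t z).trans_lt ((ENNReal.ofReal_lt_ofReal_iff (hc.trans_lt hr)).mp hz)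

lemma mul_div_two_le_chi_one {χ x t : ℝ} (hχ : χ ∈ Ioc 0 1) (hx : x ∈ Ioc 0 1)
    (ht : x / 2 ≤ t) : x * χ / 2 ≤ chi χ 1 t := by
  obtain ⟨hχ0, hχ1⟩ := hχ
  obtain ⟨hx0, hx1⟩ := hx
  rw [chi, pow_one]
  exact le_min (by nlinarith) (by nlinarith)

lemma memD_one_eventually_slope_lt {χ a₁ : ℝ} {g : ℝ → ℝ} (hχ : 0 < χ) (ha : 0 ≤ a₁)
    (hg : memD χ (fun _ ↦ a₁) 1 g) {t r : ℝ} (ht : t ∈ Ioo 0 1)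
    (hr : a₁ * g t / chi χ 1 t < r) : ∀ᶠ z in 𝓝[>] t, slope g t z < r := by
  have hIoc : Ioc 0 1 ∈ 𝓝[>] t :=
    mem_of_superset (Ioc_mem_nhdsGT ht.2) (Ioc_subset_Ioc_left ht.1.le)
  have hc : 0 ≤ a₁ * g t / chi χ 1 t := by
    have := hg.1 t (Ioo_subset_Ioc_self ht)
    have : 0 < chi χ 1 t := lt_min (by simpa using ht.1) hχ
    positivity
  exact eventually_slope_lt_of_lipWithin_le hIoc (by simpa using hg.2.2.2 t (Ioo_subset_Ioc_self ht))
    hc hr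

lemma memD_one_le_mul_exp {χ a₁ : ℝ} {g : ℝ → ℝ} (hχ : χ ∈ Ioc 0 1) (ha : 0 ≤ a₁)
    (hg : memD χ (fun _ ↦ a₁) 1 g) {x y : ℝ} (hx : x ∈ Ioc 0 1) (hy : y ∈ Icc (x / 2) x) :
    g x ≤ g y * Real.exp (a₁ / χ) := by
  have hpos := hg.1
  have hsub : Icc y x ⊆ Ioc 0 1 := fun t ht ↦
    ⟨(half_pos hx.1).trans_le (hy.1.trans ht.1), ht.2.trans hx.2⟩
  have hxχ : 0 < x * χ / 2 := half_pos (mul_pos hx.1 hχ.1)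
  have hchi : ∀ t ∈ Icc y x, x * χ / 2 ≤ chi χ 1 t := fun t ht ↦
    mul_div_two_le_chi_one hχ hx (hy.1.trans ht.1)
  set K := 2 * a₁ / (x * χ) with hK
  have hK0 : 0 ≤ K := div_nonneg (by positivity) (mul_pos hx.1 hχ.1).le
  have hgronwall := le_gronwallBound_of_liminf_deriv_right_le (f' := fun t ↦ a₁ * g t / chi χ 1 t)
    (δ := g y) (K := K) (ε := 0) (hg.2.1.continuousOn.mono hsub) ?slope le_rfl ?bound x
    (right_mem_Icc.mpr hy.2)
  case slope =>
    intro t ht r hr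
    refine (memD_one_eventually_slope_lt hχ.1 ha hg ⟨(hsub (Ico_subset_Icc_self ht)).1,
      ht.2.trans_le hx.2⟩ hr).frequently.mono fun z hz ↦ ?_
    rwa [slope_def_module, smul_eq_mul] at hz
  case bound =>
    intro t ht
    have hchit := hchi t (Ico_subset_Icc_self ht)
    have := hpos t (hsub (Ico_subset_Icc_self ht))
    rw [add_zero, div_le_iff₀ (hxχ.trans_le hchit)]
    calc a₁ * g t = K * g t * (x * χ / 2) := by rw [hK]; field_simp [hx.1.ne', hχ.1.ne']
      _ ≤ K * g t * chi χ 1 t := by gcongr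
  have hexp : K * (x - y) ≤ a₁ / χ := by
    calc K * (x - y) ≤ K * (x / 2) := by gcongr; linarith [hy.1]
      _ = a₁ / χ := by rw [hK]; field_simp [hx.1.ne', hχ.1.ne']
  calc g x ≤ g y * Real.exp (K * (x - y)) := by rwa [gronwallBound_ε0] at hgronwall
    _ ≤ g y * Real.exp (a₁ / χ) := by
      gcongr
      exact (hpos y (hsub (left_mem_Icc.mpr hy.2))).le

lemma half_mul_le_intervalIntegral {g : ℝ → ℝ} {x m : ℝ} (hx : 0 ≤ x)
    (hg : IntervalIntegrable g volume 0 x) (hnonneg : ∀ t ∈ Ioc 0 x, 0 ≤ g t)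
    (hm : ∀ t ∈ Icc (x / 2) x, m ≤ g t) :
    x / 2 * m ≤ ∫ t in 0..x, g t := by
  have hx2 : 0 ≤ x / 2 := by positivity
  have hhalf : x / 2 * m ≤ ∫ t in (x / 2)..x, g t := by
    have := intervalIntegral.integral_mono_on (by linarith) intervalIntegrable_const
      (hg.mono_set (uIcc_subset_uIcc (by simp [hx, hx2]) (by simp))) hm
    simpa [intervalIntegral.integral_const, show x - x / 2 = x / 2 by ring] using this
  refine hhalf.trans (intervalIntegral.integral_mono_interval (by linarith) (by linarith) le_rfl ?_ hg)
  filter_upwards [ae_restrict_mem measurableSet_Ioc] with t ht using hnonneg t ht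

/-- THEOREM 7 (Remark 2.2): if `g ∈ D^1_1` then `g(x) ≤ C x^{-γ}`, with `C` depending
only on `a₁, A, χ*` and `γ`. -/
theorem pointwise_bound_D1 :
    ∀ γ χstar a₁ A : ℝ, γ ∈ Set.Ico (0:ℝ) 1 → χstar ∈ Set.Ioc (0:ℝ) 1 →
      0 < a₁ → 0 < A →
      ∃ C : ℝ, 0 < C ∧
        ∀ g : ℝ → ℝ, memD1 χstar γ A (fun _ => a₁) 1 g →
          ∀ x ∈ Set.Ioc (0:ℝ) 1, g x ≤ C * x ^ (-γ) := by
  intro γ χstar a₁ A _ hχ ha hA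
  have hχ0 := hχ.1
  set E := Real.exp (a₁ / χstar)
  have hE : 0 < E := Real.exp_pos _
  refine ⟨2 * A * E, by positivity, ?_⟩
  rintro g ⟨hgD, hg_one, hg_mass⟩ x hx
  have hint : IntervalIntegrable g volume 0 x :=
    (intervalIntegral.intervalIntegrable_of_integral_ne_zero (hg_one ▸ one_ne_zero)).mono_set
      (uIcc_subset_uIcc (by simp) (by simp [hx.1.le, hx.2]))
  have hlower : x / 2 * (g x / E) ≤ ∫ t in 0..x, g t :=
    half_mul_le_intervalIntegral hx.1.le hint (fun t ht ↦ (hgD.1 t ⟨ht.1, ht.2.trans hx.2⟩).le)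
      fun y hy ↦ (div_le_iff₀ (Real.exp_pos _)).mpr (memD_one_le_mul_exp hχ ha.le hgD hx hy)
  have hpow : x ^ (1 - γ) = x * x ^ (-γ) := by
    rw [sub_eq_add_neg, Real.rpow_add hx.1, Real.rpow_one]
  have hmass := (hlower.trans (hg_mass x hx)).trans_eq (by rw [hpow])
  calc g x = 2 * E / x * (x / 2 * (g x / E)) := by field_simp [hx.1.ne', hE.ne']
    _ ≤ 2 * E / x * (A * (x * x ^ (-γ))) := by have := hx.1; gcongr
    _ = 2 * A * E * x ^ (-γ) := by field_simp [hx.1.ne']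
end

section
/- There is a constant C_{β,γ} > 0, depending only on β and γ, such that: if a nonnegative real sequence (δ_n)_{n≥0} satisfies δ_n ≤ ξ n^{−1/γ + 1} + σ Σ_{j=0}^{n−1} δ_j (n−j)^{−1/γ + β/γ} for all n > 0, with some σ ∈ (0, C_{β,γ}^{−1}) and ξ > 0, then δ_n ≤ max{ δ₀, ξ/(1 − σ C_{β,γ}) } · n^{−1/γ + 1} for all n > 0. -/
/-- Integral comparison: `∑_{i<m} (i+1)^c ≤ 1 + (m^(c+1) - 1)/(c+1)` for `c ≤ 0`, `c ≠ -1`. -/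
lemma sum_rpow_base (c : ℝ) (hc : c ≤ 0) (hc1 : c ≠ -1) (m : ℕ) (hm : 1 ≤ m) :
    ∑ i ∈ Finset.range m, ((i : ℝ) + 1) ^ c ≤ 1 + ((m : ℝ) ^ (c + 1) - 1) / (c + 1) := by
  obtain ⟨k, rfl⟩ : ∃ k, m = k + 1 := ⟨m - 1, by omega⟩
  rw [Finset.sum_range_succ']
  have hanti : AntitoneOn (fun x : ℝ => x ^ c) (Set.Icc 1 (1 + (k : ℝ))) := by
    intro x hx y hy hxy
    exact Real.rpow_le_rpow_of_nonpos (lt_of_lt_of_le one_pos hx.1) hxy hc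
  have hint := hanti.sum_le_integral
  have hval : ∫ x in (1:ℝ)..(1 + (k:ℝ)), x ^ c
      = ((1 + (k:ℝ)) ^ (c + 1) - 1) / (c + 1) := by
    rw [integral_rpow (Or.inr ⟨hc1, by
      rw [Set.mem_uIcc]; push_neg
      constructor <;> intro h <;> nlinarith [Nat.cast_nonneg (α := ℝ) k]⟩)]
    rw [Real.one_rpow]
  have hsum : ∑ i ∈ Finset.range k, (((i:ℕ) + 1 : ℝ) + 1) ^ c
      ≤ ((1 + (k:ℝ)) ^ (c + 1) - 1) / (c + 1) := by
    rw [← hval]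
    convert hint using 2 with i
    push_cast
    ring_nf
  have h0 : ((0:ℕ) : ℝ) + 1 = 1 := by norm_num
  have : (((k:ℕ) + 1 : ℕ) : ℝ) = 1 + (k : ℝ) := by push_cast; ring
  rw [this]
  calc ∑ i ∈ Finset.range k, (((i+1 : ℕ) : ℝ) + 1) ^ c + (((0:ℕ):ℝ) + 1) ^ c
      ≤ ((1 + (k:ℝ)) ^ (c + 1) - 1) / (c + 1) + 1 := by
        rw [h0, Real.one_rpow]
        refine add_le_add ?_ le_rfl
        refine le_trans (le_of_eq ?_) hsum
        apply Finset.sum_congr rfl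
        intro i _
        push_cast
        ring_nf
    _ = 1 + ((1 + (k:ℝ)) ^ (c + 1) - 1) / (c + 1) := by ring



lemma sum_rpow_A {s : ℝ} (hs0 : 0 ≤ s) (hs1 : s < 1) {m n : ℕ} (hmn : m ≤ n) (hn : 1 ≤ n) :
    ∑ i ∈ Finset.range m, ((i : ℝ) + 1) ^ (-s) ≤ (1 + 1/(1-s)) * (n : ℝ) ^ (1-s) := by
  have h1s : 0 < 1 - s := by linarith
  have hn1 : (1:ℝ) ≤ (n:ℝ) := by exact_mod_cast hn
  have hnp : (1:ℝ) ≤ (n:ℝ) ^ (1-s) := Real.one_le_rpow hn1 h1s.le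
  rcases Nat.eq_zero_or_pos m with rfl | hm
  · simp only [Finset.range_zero, Finset.sum_empty]
    positivity
  have h := sum_rpow_base (-s) (by linarith) (by intro h; linarith) m hm
  have he : -s + 1 = 1 - s := by ring
  rw [he] at h
  have hmn' : (m:ℝ) ^ (1-s) ≤ (n:ℝ) ^ (1-s) :=
    Real.rpow_le_rpow (Nat.cast_nonneg m) (by exact_mod_cast hmn) h1s.le
  calc ∑ i ∈ Finset.range m, ((i : ℝ) + 1) ^ (-s)
      ≤ 1 + ((m : ℝ) ^ (1-s) - 1) / (1-s) := h
    _ ≤ (n:ℝ)^(1-s) + (n:ℝ)^(1-s) / (1-s) := by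
        gcongr
        linarith
    _ = (1 + 1/(1-s)) * (n : ℝ) ^ (1-s) := by field_simp

lemma sum_rpow_Z {b : ℝ} (hb : b < -1) (m : ℕ) :
    ∑ i ∈ Finset.range m, ((i : ℝ) + 1) ^ b ≤ 1 + 1/(-b-1) := by
  have hb1 : (0:ℝ) < -b-1 := by linarith
  rcases Nat.eq_zero_or_pos m with rfl | hm
  · simp only [Finset.range_zero, Finset.sum_empty]
    positivity
  have h := sum_rpow_base b (by linarith) (by linarith) m hm
  refine h.trans ?_
  have h0 : (0:ℝ) ≤ (m:ℝ) ^ (b+1) := Real.rpow_nonneg (Nat.cast_nonneg m) _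
  have e : ((m:ℝ)^(b+1) - 1)/(b+1) = (1 - (m:ℝ)^(b+1))/(-b-1) := by
    rw [div_eq_div_iff (by linarith) (by linarith)]
    ring
  rw [e]
  have : (1 - (m:ℝ)^(b+1))/(-b-1) ≤ 1/(-b-1) := by
    gcongr
    linarith
  linarith




/-- THEOREM 11 (Lemma 3.6): discrete Gronwall-type inequality with polynomial kernels. -/
theorem gronwall_polynomial :
    ∀ γ β : ℝ, γ ∈ Set.Ioo (0:ℝ) 1 → 0 ≤ β → β < min γ (1 - γ) →
      ∃ C : ℝ, 0 < C ∧
        ∀ δ : ℕ → ℝ, (∀ n, 0 ≤ δ n) →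
        ∀ σ ξ : ℝ, σ ∈ Set.Ioo (0:ℝ) C⁻¹ → 0 < ξ →
          (∀ n : ℕ, 0 < n →
            δ n ≤ ξ * (n : ℝ) ^ (-1 / γ + 1) +
              σ * ∑ j ∈ Finset.range n, δ j * ((n - j : ℕ) : ℝ) ^ (-1 / γ + β / γ)) →
          ∀ n : ℕ, 0 < n →
            δ n ≤ max (δ 0) (ξ / (1 - σ * C)) * (n : ℝ) ^ (-1 / γ + 1) := by
  intro γ β hγ hβ0 hβm
  obtain ⟨hγ0, hγ1⟩ := hγ
  have hβγ : β < γ := lt_of_lt_of_le hβm (min_le_left _ _)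
  have hβ1γ : β < 1 - γ := lt_of_lt_of_le hβm (min_le_right _ _)
  have hγinv : 1 < 1 / γ := (one_lt_div hγ0).2 hγ1
  -- arithmetic facts about the exponents, stated on the raw expressions
  have hs0 : 0 ≤ β / γ := div_nonneg hβ0 hγ0.le
  have hs1 : β / γ < 1 := (div_lt_one hγ0).2 hβγ
  have ha0 : -1 / γ + 1 < 0 := by rw [neg_div]; linarith
  have hb1 : -1 / γ + β / γ < -1 := by
    have h1 : β / γ - 1 / γ < -1 := by
      rw [div_sub_div_same, div_lt_iff₀ hγ0]; linarith
    rw [neg_div]; linarith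
  have hba : -1 / γ + β / γ ≤ -1 / γ + 1 := by linarith
  have has : -1 / γ + 1 ≤ -(β / γ) := by linarith
  have hbsa : (-1 / γ + β / γ) + (1 - β / γ) = -1 / γ + 1 := by ring
  set s : ℝ := β / γ with hs_def
  set a : ℝ := -1 / γ + 1 with ha_def
  set b : ℝ := -1 / γ + β / γ with hb_def
  set K₁ : ℝ := 1 + 1/(1-s) with hK₁_def
  set K₂ : ℝ := 1 + 1/(-b-1) with hK₂_def
  have hK₁ : 0 < K₁ := by
    have : 0 < 1 - s := by linarith
    positivity
  have hK₂ : 0 < K₂ := by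
    have : 0 < -b-1 := by linarith
    positivity
  have hhalfb : (0:ℝ) < (1/2:ℝ) ^ b := Real.rpow_pos_of_pos (by norm_num) _
  have hhalfa : (0:ℝ) < (1/2:ℝ) ^ a := Real.rpow_pos_of_pos (by norm_num) _
  set C : ℝ := 1 + (1/2:ℝ) ^ b * K₁ + (1/2:ℝ) ^ a * K₂ with hC_def
  have hC : 0 < C := by positivity
  clear_value s a b K₁ K₂ C
  refine ⟨C, hC, ?_⟩
  intro δ hδ σ ξ hσ hξ hrec
  obtain ⟨hσ0, hσC⟩ := hσ
  have hσC1 : σ * C < 1 := by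
    have := mul_lt_mul_of_pos_right hσC hC
    rwa [inv_mul_cancel₀ hC.ne'] at this
  have h1σC : 0 < 1 - σ * C := by linarith
  set M : ℝ := max (δ 0) (ξ / (1 - σ * C)) with hM_def
  clear_value M
  have hMξ : ξ / (1 - σ * C) ≤ M := by rw [hM_def]; exact le_max_right _ _
  have hM0 : 0 < M := lt_of_lt_of_le (div_pos hξ h1σC) hMξ
  have hMδ0 : δ 0 ≤ M := by rw [hM_def]; exact le_max_left _ _
  have hξM : ξ ≤ M * (1 - σ * C) := by
    rw [div_le_iff₀ h1σC] at hMξ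
    linarith
  -- main claim by strong induction
  have main : ∀ n : ℕ, 0 < n → δ n ≤ M * (n : ℝ) ^ a := by
    intro n
    induction n using Nat.strong_induction_on with
    | _ n IH =>
      intro hn
      obtain ⟨m, rfl⟩ : ∃ m, n = m + 1 := ⟨n - 1, by omega⟩
      have hn1 : (1:ℝ) ≤ ((m+1 : ℕ):ℝ) := by exact_mod_cast hn
      have hnpos : (0:ℝ) < ((m+1 : ℕ):ℝ) := by linarith
      have hnhalf : (0:ℝ) < ((m+1 : ℕ):ℝ)/2 := by linarith
      have hna : (0:ℝ) < ((m+1 : ℕ):ℝ) ^ a := Real.rpow_pos_of_pos hnpos _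
      -- bound for the peeled j = 0 term
      have hterm0 : δ 0 * ((m + 1 - 0 : ℕ) : ℝ) ^ b ≤ M * ((m+1 : ℕ):ℝ) ^ a := by
        simp only [Nat.sub_zero]
        have h1 : ((m+1 : ℕ):ℝ) ^ b ≤ ((m+1 : ℕ):ℝ) ^ a :=
          Real.rpow_le_rpow_of_exponent_le hn1 hba
        have h2 : (0:ℝ) ≤ ((m+1 : ℕ):ℝ) ^ b := (Real.rpow_pos_of_pos hnpos _).le
        calc δ 0 * ((m+1 : ℕ):ℝ) ^ b ≤ M * ((m+1 : ℕ):ℝ) ^ b :=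
              mul_le_mul_of_nonneg_right hMδ0 h2
          _ ≤ M * ((m+1 : ℕ):ℝ) ^ a := mul_le_mul_of_nonneg_left h1 hM0.le
      -- termwise convolution bound
      have hconv : ∀ i ∈ Finset.range m,
          ((i:ℝ) + 1) ^ a * ((m - i : ℕ) : ℝ) ^ b
            ≤ (((m+1 : ℕ):ℝ)/2) ^ b * ((i:ℝ) + 1) ^ (-s)
              + (((m+1 : ℕ):ℝ)/2) ^ a * ((m - i : ℕ) : ℝ) ^ b := by
        intro i hi
        rw [Finset.mem_range] at hi
        have hji : (1:ℝ) ≤ (i:ℝ) + 1 := by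
          have : (0:ℝ) ≤ (i:ℝ) := Nat.cast_nonneg i
          linarith
        have hki : (1:ℝ) ≤ ((m - i : ℕ) : ℝ) := by
          have : 1 ≤ m - i := by omega
          exact_mod_cast this
        have hcast : ((i:ℝ) + 1) + ((m - i : ℕ) : ℝ) = ((m+1 : ℕ):ℝ) := by
          have h : ((i + 1) + (m - i) : ℕ) = m + 1 := by omega
          exact_mod_cast h
        have hb0 : (0:ℝ) ≤ ((m - i : ℕ) : ℝ) ^ b := Real.rpow_nonneg (by linarith) _
        have hs0' : (0:ℝ) ≤ ((i:ℝ) + 1) ^ (-s) := Real.rpow_nonneg (by linarith) _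
        rcases le_total (((m+1 : ℕ):ℝ)/2) ((m - i : ℕ) : ℝ) with hcase | hcase
        · have h1 : ((m - i : ℕ) : ℝ) ^ b ≤ (((m+1 : ℕ):ℝ)/2) ^ b :=
            Real.rpow_le_rpow_of_nonpos hnhalf hcase (by linarith)
          have h2 : ((i:ℝ) + 1) ^ a ≤ ((i:ℝ) + 1) ^ (-s) :=
            Real.rpow_le_rpow_of_exponent_le hji has
          have h3 := mul_le_mul h2 h1 hb0 hs0'
          have hpos2 : (0:ℝ) ≤ (((m+1 : ℕ):ℝ)/2) ^ a * ((m - i : ℕ) : ℝ) ^ b := by positivity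
          linarith
        · have hjge : (((m+1 : ℕ):ℝ)/2) ≤ (i:ℝ) + 1 := by linarith
          have h1 : ((i:ℝ) + 1) ^ a ≤ (((m+1 : ℕ):ℝ)/2) ^ a :=
            Real.rpow_le_rpow_of_nonpos hnhalf hjge (by linarith)
          have h3 := mul_le_mul_of_nonneg_right h1 hb0
          have hpos1 : (0:ℝ) ≤ (((m+1 : ℕ):ℝ)/2) ^ b * ((i:ℝ) + 1) ^ (-s) := by positivity
          linarith
      -- the two convolution sums
      have hsumA : ∑ i ∈ Finset.range m, ((i:ℝ) + 1) ^ (-s) ≤ K₁ * ((m+1 : ℕ):ℝ) ^ (1-s) := by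
        have := sum_rpow_A hs0 hs1 (show m ≤ m+1 by omega) hn
        rw [hK₁_def]
        linarith
      have hsumZ : ∑ i ∈ Finset.range m, ((m - i : ℕ) : ℝ) ^ b ≤ K₂ := by
        have hrefl : ∑ i ∈ Finset.range m, ((m - i : ℕ) : ℝ) ^ b
            = ∑ i ∈ Finset.range m, (((i+1 : ℕ)) : ℝ) ^ b := by
          rw [← Finset.sum_range_reflect (fun i => (((i+1:ℕ)):ℝ) ^ b) m]
          refine Finset.sum_congr rfl fun i hi => ?_
          rw [Finset.mem_range] at hi
          congr 2
          omega
        have hcastsum : ∑ i ∈ Finset.range m, (((i+1:ℕ)):ℝ) ^ b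
            = ∑ i ∈ Finset.range m, ((i:ℝ) + 1) ^ b := by
          refine Finset.sum_congr rfl fun i _ => ?_
          push_cast
          rfl
        rw [hrefl, hcastsum, hK₂_def]
        exact sum_rpow_Z hb1 m
      -- total sum bound
      have hsum_bound : ∑ j ∈ Finset.range (m+1), δ j * ((m + 1 - j : ℕ) : ℝ) ^ b
          ≤ M * C * ((m+1 : ℕ):ℝ) ^ a := by
        rw [Finset.sum_range_succ']
        have hIH : ∀ i ∈ Finset.range m,
            δ (i+1) * ((m + 1 - (i+1) : ℕ) : ℝ) ^ b
              ≤ M * (((i:ℝ) + 1) ^ a * ((m - i : ℕ) : ℝ) ^ b) := by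
          intro i hi
          rw [Finset.mem_range] at hi
          have e : m + 1 - (i + 1) = m - i := by omega
          rw [e]
          have hb0 : (0:ℝ) ≤ ((m - i : ℕ) : ℝ) ^ b := Real.rpow_nonneg (Nat.cast_nonneg _) _
          have hd : δ (i+1) ≤ M * (((i+1:ℕ)):ℝ) ^ a := IH (i+1) (by omega) (by omega)
          have hc : (((i+1:ℕ)):ℝ) = (i:ℝ) + 1 := by push_cast; ring
          rw [hc] at hd
          calc δ (i+1) * ((m - i : ℕ) : ℝ) ^ b
              ≤ (M * ((i:ℝ) + 1) ^ a) * ((m - i : ℕ) : ℝ) ^ b :=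
                mul_le_mul_of_nonneg_right hd hb0
            _ = M * (((i:ℝ) + 1) ^ a * ((m - i : ℕ) : ℝ) ^ b) := by ring
        have step1 : ∑ i ∈ Finset.range m, δ (i+1) * ((m + 1 - (i+1) : ℕ) : ℝ) ^ b
            ≤ M * ∑ i ∈ Finset.range m, (((i:ℝ) + 1) ^ a * ((m - i : ℕ) : ℝ) ^ b) := by
          rw [Finset.mul_sum]
          exact Finset.sum_le_sum hIH
        have step2 : ∑ i ∈ Finset.range m, (((i:ℝ) + 1) ^ a * ((m - i : ℕ) : ℝ) ^ b)
            ≤ (((m+1 : ℕ):ℝ)/2) ^ b * (K₁ * ((m+1 : ℕ):ℝ)^(1-s))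
              + (((m+1 : ℕ):ℝ)/2) ^ a * K₂ := by
          have hposb : (0:ℝ) ≤ (((m+1 : ℕ):ℝ)/2) ^ b := (Real.rpow_pos_of_pos hnhalf _).le
          have hposa : (0:ℝ) ≤ (((m+1 : ℕ):ℝ)/2) ^ a := (Real.rpow_pos_of_pos hnhalf _).le
          calc ∑ i ∈ Finset.range m, (((i:ℝ) + 1) ^ a * ((m - i : ℕ) : ℝ) ^ b)
              ≤ ∑ i ∈ Finset.range m, ((((m+1 : ℕ):ℝ)/2) ^ b * ((i:ℝ) + 1) ^ (-s)
                  + (((m+1 : ℕ):ℝ)/2) ^ a * ((m - i : ℕ) : ℝ) ^ b) := Finset.sum_le_sum hconv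
            _ = (((m+1 : ℕ):ℝ)/2) ^ b * ∑ i ∈ Finset.range m, ((i:ℝ) + 1) ^ (-s)
                  + (((m+1 : ℕ):ℝ)/2) ^ a * ∑ i ∈ Finset.range m, ((m - i : ℕ) : ℝ) ^ b := by
                rw [Finset.sum_add_distrib, Finset.mul_sum, Finset.mul_sum]
            _ ≤ _ := add_le_add (mul_le_mul_of_nonneg_left hsumA hposb)
                  (mul_le_mul_of_nonneg_left hsumZ hposa)
        have step3 : (((m+1 : ℕ):ℝ)/2) ^ b * (K₁ * ((m+1 : ℕ):ℝ)^(1-s))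
              + (((m+1 : ℕ):ℝ)/2) ^ a * K₂
            = ((1/2:ℝ)^b * K₁ + (1/2:ℝ)^a * K₂) * ((m+1 : ℕ):ℝ) ^ a := by
          have e1 : (((m+1 : ℕ):ℝ)/2) ^ b = ((m+1 : ℕ):ℝ)^b * (1/2:ℝ)^b := by
            rw [show ((m+1 : ℕ):ℝ)/2 = ((m+1 : ℕ):ℝ) * (1/2:ℝ) by ring,
              Real.mul_rpow hnpos.le (by norm_num)]
          have e2 : (((m+1 : ℕ):ℝ)/2) ^ a = ((m+1 : ℕ):ℝ)^a * (1/2:ℝ)^a := by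
            rw [show ((m+1 : ℕ):ℝ)/2 = ((m+1 : ℕ):ℝ) * (1/2:ℝ) by ring,
              Real.mul_rpow hnpos.le (by norm_num)]
          have e3 : ((m+1 : ℕ):ℝ)^b * ((m+1 : ℕ):ℝ)^(1-s) = ((m+1 : ℕ):ℝ)^a := by
            rw [← Real.rpow_add hnpos, hbsa]
          rw [e1, e2]
          calc ((m+1 : ℕ):ℝ)^b * (1/2:ℝ)^b * (K₁ * ((m+1 : ℕ):ℝ)^(1-s))
                + ((m+1 : ℕ):ℝ)^a * (1/2:ℝ)^a * K₂
              = (1/2:ℝ)^b * K₁ * (((m+1 : ℕ):ℝ)^b * ((m+1 : ℕ):ℝ)^(1-s))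
                + (1/2:ℝ)^a * K₂ * ((m+1 : ℕ):ℝ)^a := by ring
            _ = ((1/2:ℝ)^b * K₁ + (1/2:ℝ)^a * K₂) * ((m+1 : ℕ):ℝ) ^ a := by rw [e3]; ring
        have hfinal : ∑ i ∈ Finset.range m, δ (i+1) * ((m + 1 - (i+1) : ℕ) : ℝ) ^ b
              + δ 0 * ((m + 1 - 0 : ℕ) : ℝ) ^ b
            ≤ M * (((1/2:ℝ)^b * K₁ + (1/2:ℝ)^a * K₂) * ((m+1 : ℕ):ℝ) ^ a)
              + M * ((m+1 : ℕ):ℝ)^a := by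
          refine add_le_add ?_ hterm0
          refine step1.trans ?_
          rw [← step3]
          exact mul_le_mul_of_nonneg_left step2 hM0.le
        refine hfinal.trans (le_of_eq ?_)
        rw [hC_def]
        ring
      -- conclude
      have h1 := hrec (m+1) hn
      have h2 : σ * ∑ j ∈ Finset.range (m+1), δ j * ((m + 1 - j : ℕ) : ℝ) ^ b
          ≤ σ * (M * C * ((m+1 : ℕ):ℝ)^a) := mul_le_mul_of_nonneg_left hsum_bound hσ0.le
      have h3 : ξ + σ * (M * C) ≤ M := by linarith only [hξM]
      have h4 := mul_le_mul_of_nonneg_right h3 hna.le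
      calc δ (m+1) ≤ _ := h1
        _ ≤ ξ * ((m+1 : ℕ):ℝ)^a + σ * (M * C * ((m+1 : ℕ):ℝ)^a) := add_le_add le_rfl h2
        _ ≤ M * ((m+1 : ℕ):ℝ)^a := by linarith only [h4]
  intro n hn
  exact main n hn
end

section
/- There exists a constant C_{β,γ} > 0, depending only on β and γ, such that for all integers n ≥ 1, Σ_{j=0}^{n−1} (j+1)^{−1/γ + 1} (n−j)^{−1/γ + β/γ} ≤ C_{β,γ} (n+1)^{−1/γ + 1}. -/
/-! The exponents are `a = 1 - 1/γ` and `b = (β - 1)/γ`, with `a ≤ 0`, `b ≤ a` and `b < -1`.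
Write `u = j + 1` and `v = n - j`, so `u + v = n + 1`. Since `b ≤ a`, moving the exponent `a`
onto the larger of `u, v` only increases `u ^ a * v ^ b`; that larger one is at least
`(n + 1) / 2` and `a ≤ 0`, so each term is at most `((n + 1) / 2) ^ a * (u ^ b + v ^ b)`.
Summed over `j`, the last factor is at most twice the convergent series `∑ (k + 1) ^ b`. -/

open Finset Real

lemma Real.rpow_mul_rpow_le_max_rpow_mul_min_rpow {u v a b : ℝ} (hu : 0 < u) (hv : 0 < v)
    (hba : b ≤ a) : u ^ a * v ^ b ≤ max u v ^ a * min u v ^ b := by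
  rcases le_total u v with huv | hvu
  · rw [max_eq_right huv, min_eq_left huv]
    have hswap : v ^ (b - a) ≤ u ^ (b - a) := rpow_le_rpow_of_nonpos hu huv (by linarith)
    calc u ^ a * v ^ b = u ^ a * v ^ a * v ^ (b - a) := by
          rw [mul_assoc, ← rpow_add hv, add_sub_cancel]
      _ ≤ u ^ a * v ^ a * u ^ (b - a) := by gcongr
      _ = v ^ a * u ^ b := by
          rw [mul_comm (u ^ a), mul_assoc, ← rpow_add hu, add_sub_cancel]
  · rw [max_eq_left hvu, min_eq_right hvu]

lemma Real.rpow_mul_rpow_le_half_add_rpow_mul {u v a b : ℝ} (hu : 0 < u) (hv : 0 < v)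
    (ha : a ≤ 0) (hba : b ≤ a) : u ^ a * v ^ b ≤ ((u + v) / 2) ^ a * (u ^ b + v ^ b) := by
  have hmax : max u v ^ a ≤ ((u + v) / 2) ^ a :=
    rpow_le_rpow_of_nonpos (by positivity) (by grind) ha
  have hmin : min u v ^ b ≤ u ^ b + v ^ b := by
    rcases min_choice u v with h | h <;> rw [h] <;>
      linarith [rpow_nonneg hu.le b, rpow_nonneg hv.le b]
  calc u ^ a * v ^ b ≤ max u v ^ a * min u v ^ b :=
        rpow_mul_rpow_le_max_rpow_mul_min_rpow hu hv hba
    _ ≤ ((u + v) / 2) ^ a * (u ^ b + v ^ b) := by gcongr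

lemma Finset.sum_range_sub_eq_sum_range_add_one {M : Type*} [AddCommMonoid M] (f : ℕ → M)
    (n : ℕ) :
    ∑ j ∈ range n, f (n - j) = ∑ j ∈ range n, f (j + 1) := by
  rw [← sum_range_reflect (fun j => f (j + 1))]
  refine sum_congr rfl fun j hj => ?_
  rw [mem_range] at hj
  congr 1
  omega

lemma Real.summable_nat_add_one_rpow {b : ℝ} (hb : b < -1) :
    Summable fun k : ℕ => ((k : ℝ) + 1) ^ b := by
  simpa using (summable_nat_add_iff 1).mpr (summable_nat_rpow.mpr hb)

lemma Real.tsum_nat_add_one_rpow_pos {b : ℝ} (hb : b < -1) :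
    0 < ∑' k : ℕ, ((k : ℝ) + 1) ^ b :=
  (summable_nat_add_one_rpow hb).tsum_pos (fun _ => by positivity) 0 (by simp)

theorem Real.sum_range_rpow_mul_rpow_le {a b : ℝ} (ha : a ≤ 0) (hb : b < -1) (hba : b ≤ a)
    (n : ℕ) :
    ∑ j ∈ range n, ((j : ℝ) + 1) ^ a * ((n - j : ℕ) : ℝ) ^ b
      ≤ 2 ^ (1 - a) * (∑' k : ℕ, ((k : ℝ) + 1) ^ b) * ((n : ℝ) + 1) ^ a := by
  set T := ∑' k : ℕ, ((k : ℝ) + 1) ^ b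
  have hterm : ∀ j ∈ range n, ((j : ℝ) + 1) ^ a * ((n - j : ℕ) : ℝ) ^ b
      ≤ (((n : ℝ) + 1) / 2) ^ a * (((j : ℝ) + 1) ^ b + ((n - j : ℕ) : ℝ) ^ b) := by
    intro j hj
    have hjn : j < n := mem_range.mp hj
    have huv : (j : ℝ) + 1 + ((n - j : ℕ) : ℝ) = (n : ℝ) + 1 := by
      rw [Nat.cast_sub hjn.le]; ring
    rw [← huv]
    exact rpow_mul_rpow_le_half_add_rpow_mul (by positivity)
      (by simpa using hjn) ha hba
  have hreflect :
      ∑ j ∈ range n, ((n - j : ℕ) : ℝ) ^ b = ∑ j ∈ range n, ((j : ℝ) + 1) ^ b := by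
    simpa using sum_range_sub_eq_sum_range_add_one (fun k : ℕ => (k : ℝ) ^ b) n
  have hpartial : ∑ j ∈ range n, ((j : ℝ) + 1) ^ b ≤ T :=
    (summable_nat_add_one_rpow hb).sum_le_tsum _ fun _ _ => by positivity
  calc ∑ j ∈ range n, ((j : ℝ) + 1) ^ a * ((n - j : ℕ) : ℝ) ^ b
      ≤ ∑ j ∈ range n,
          (((n : ℝ) + 1) / 2) ^ a * (((j : ℝ) + 1) ^ b + ((n - j : ℕ) : ℝ) ^ b) :=
        sum_le_sum hterm
    _ = (((n : ℝ) + 1) / 2) ^ a * (2 * ∑ j ∈ range n, ((j : ℝ) + 1) ^ b) := by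
        rw [← mul_sum, sum_add_distrib, hreflect, two_mul]
    _ ≤ (((n : ℝ) + 1) / 2) ^ a * (2 * T) := by gcongr
    _ = 2 ^ (1 - a) * T * ((n : ℝ) + 1) ^ a := by
        rw [div_rpow (by positivity) zero_le_two, rpow_sub zero_lt_two, rpow_one]
        field_simp

/-- THEOREM 12 (inequality (3.4)): convolution-type estimate for polynomial sequences. -/
theorem polynomial_convolution_bound :
    ∀ γ β : ℝ, γ ∈ Set.Ioo (0:ℝ) 1 → 0 ≤ β → β < min γ (1 - γ) →
      ∃ C : ℝ, 0 < C ∧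
        ∀ n : ℕ, 1 ≤ n →
          ∑ j ∈ Finset.range n,
              ((j : ℝ) + 1) ^ (-1 / γ + 1) * ((n - j : ℕ) : ℝ) ^ (-1 / γ + β / γ)
            ≤ C * ((n : ℝ) + 1) ^ (-1 / γ + 1) := by
  rintro γ β ⟨hγ0, hγ1⟩ - hβ
  obtain ⟨hβγ, hβγ'⟩ := lt_min_iff.mp hβ
  have ha : -1 / γ + 1 ≤ 0 := by
    rw [neg_div, neg_add_le_iff_le_add, add_zero, le_div_iff₀ hγ0]; linarith
  have hb : -1 / γ + β / γ < -1 := by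
    rw [← add_div, div_lt_iff₀ hγ0]; linarith
  have hba : -1 / γ + β / γ ≤ -1 / γ + 1 := by
    rw [add_le_add_iff_left, div_le_one hγ0]; exact hβγ.le
  exact ⟨_, mul_pos (by positivity) (tsum_nat_add_one_rpow_pos hb),
    fun n _ => sum_range_rpow_mul_rpow_le ha hb hba n⟩
end
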